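/- arXiv:1002.1345 — 3 statements merged into one kernel-verified Lean document; each statement's English description precedes it below -/
import Mathlib

section
/- Let R be a commutative ring with identity and let a_1,...,a_k be a regular sequence in R. If F(t_1,...,t_k) is a homogeneous polynomial in k variables with coefficients in R such that F(a_1,...,a_k) = 0, then every coefficient of F lies in the ideal (a_1,...,a_k). -/
/-!
The hypothesis `F(a) = 0` is too weak to induct on; one proves instead that a regular sequence is
quasi-regular: a form of degree `d` with `F(a) ∈ I ^ (d + 1)` has its coefficients in `I`.
Induct on the length, writing `I = J + (b)` with `b` the last element. Quasi-regularity of the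
shorter sequence upgrades "`b` is a nonzerodivisor modulo `J`" to "modulo every `J ^ n`".
Splitting `F = X_last * H + G` with `G` free of the last variable,
`F(a) ∈ I ^ (d + 1) ⊆ J ^ (d + 1) + b I ^ d` then forces `H(a) ∈ I ^ d` (handled by induction
on `d`) and `G(a) ∈ J ^ (d + 1) + b J ^ d`, which quasi-regularity of the shorter sequence turns
into coefficients in `J + (b)`.
-/

open MvPolynomial Ideal

namespace Ideal

variable {R : Type*} [CommRing R]

theorem sup_pow_succ_le (J B : Ideal R) (n : ℕ) :
    (J ⊔ B) ^ (n + 1) ≤ J ^ (n + 1) ⊔ B * (J ⊔ B) ^ n := by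
  induction n with
  | zero => simp
  | succ n ih =>
    calc (J ⊔ B) ^ (n + 2) = (J ⊔ B) ^ (n + 1) * (J ⊔ B) := pow_succ _ _
      _ ≤ (J ^ (n + 1) ⊔ B * (J ⊔ B) ^ n) * (J ⊔ B) := mul_mono_left ih
      _ = J ^ (n + 2) ⊔ (J ^ (n + 1) * B ⊔ B * (J ⊔ B) ^ (n + 1)) := by
        rw [sup_mul, mul_sup, ← pow_succ, mul_assoc, ← pow_succ, sup_assoc]
      _ ≤ J ^ (n + 2) ⊔ B * (J ⊔ B) ^ (n + 1) := by
        refine sup_le_sup_left (sup_le ?_ le_rfl) _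
        rw [mul_comm]
        exact mul_mono_right (pow_right_mono le_sup_left _)

theorem mem_sup_pow_of_sub_mul_mem_pow {J : Ideal R} {b y z : R} {n : ℕ}
    (hb : ∀ x, b * x ∈ J ^ n → x ∈ J ^ n) (hy : y ∈ (J ⊔ span {b}) ^ (n + 1))
    (hyz : y - b * z ∈ J ^ n) :
    z ∈ (J ⊔ span {b}) ^ n ∧ y - b * z ∈ J ^ (n + 1) ⊔ span {b} * J ^ n := by
  obtain ⟨u, hu, w, hw, rfl⟩ := Submodule.mem_sup.mp (sup_pow_succ_le J _ n hy)
  obtain ⟨v, hv, rfl⟩ := mem_span_singleton_mul.mp hw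
  have hvz : v - z ∈ J ^ n := by
    refine hb _ ?_
    have : b * (v - z) = (u + b * v - b * z) - u := by ring
    rw [this]
    exact sub_mem hyz (pow_le_pow_right n.le_succ hu)
  constructor
  · simpa using sub_mem hv (pow_right_mono le_sup_left n hvz)
  · have : u + b * v - b * z = u + b * (v - z) := by ring
    rw [this]
    exact add_mem (Submodule.mem_sup_left hu)
      (Submodule.mem_sup_right (mem_span_singleton_mul.mpr ⟨_, hvz, rfl⟩))

theorem span_range_eq_span_range_init_sup {k : ℕ} (a : Fin (k + 1) → R) :
    span (Set.range a) = span (Set.range (Fin.init a)) ⊔ span {a (Fin.last k)} := by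
  conv_lhs => rw [← Fin.snoc_init_self a]
  rw [Fin.range_snoc, Set.insert_eq, span_union, sup_comm]

end Ideal

namespace MvPolynomial

variable {R σ : Type*} [CommRing R]

theorem eval_mem_span_pow (a : σ → R) {n : ℕ} {F : MvPolynomial σ R} (hF : F.IsHomogeneous n) :
    eval a F ∈ span (Set.range a) ^ n :=
  (mem_span_pow_iff_exists_isHomogeneous a _).mpr ⟨F, hF, rfl⟩

theorem eval_mem_mul_span_pow (a : σ → R) {n : ℕ} {F : MvPolynomial σ R}
    (hF : F.IsHomogeneous n) {K : Ideal R} (hK : ∀ m, F.coeff m ∈ K) :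
    eval a F ∈ K * span (Set.range a) ^ n := by
  classical
  rw [F.as_sum, map_sum]
  refine sum_mem fun m hm => ?_
  rw [← mul_one (coeff m F), ← C_mul_monomial, map_mul, eval_C]
  refine mul_mem_mul (hK m) (eval_mem_span_pow a (isHomogeneous_monomial 1 ?_))
  exact (hF.degree_eq_sum_deg_support hm).symm

theorem coeff_mem_of_isHomogeneous_zero (a : σ → R) {F : MvPolynomial σ R}
    (hF : F.IsHomogeneous 0) {I : Ideal R} (h : eval a F ∈ I) (m : σ →₀ ℕ) : F.coeff m ∈ I := by
  classical
  rw [← totalDegree_zero_iff_isHomogeneous, totalDegree_eq_zero_iff_eq_C] at hF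
  rw [hF, eval_C] at h
  rw [hF, coeff_C]
  split_ifs
  · exact h
  · exact zero_mem I

theorem rename_mem_map_C {τ : Type*} (f : σ → τ) {I : Ideal R} {q : MvPolynomial σ R}
    (hq : q ∈ I.map C) : rename f q ∈ I.map (C : R →+* MvPolynomial τ R) := by
  have := mem_map_of_mem (rename f : MvPolynomial σ R →ₐ[R] _).toRingHom hq
  rwa [Ideal.map_map, show (rename f).toRingHom.comp C = (C : R →+* MvPolynomial τ R) from
    RingHom.ext (rename_C f)] at this

theorem exists_X_mul_add_of_isHomogeneous (i : σ) {d : ℕ} {F : MvPolynomial σ R}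
    (hF : F.IsHomogeneous (d + 1)) :
    ∃ H G : MvPolynomial σ R, H.IsHomogeneous d ∧ G.IsHomogeneous (d + 1) ∧ i ∉ G.vars ∧
      X i * H + G = F := by
  set s : σ →₀ ℕ := Finsupp.single i 1
  refine ⟨F.divMonomial s, F.modMonomial s, fun m hm => ?_, fun m hm => ?_, fun hi => ?_,
    divMonomial_add_modMonomial F s⟩
  · rw [coeff_divMonomial] at hm
    have := hF hm
    rw [map_add, Finsupp.weight_single, Pi.one_apply, one_smul] at this
    omega
  · by_cases hs : s ≤ m
    · exact absurd (coeff_modMonomial_of_le F hs) hm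
    · rw [coeff_modMonomial_of_not_le F hs] at hm
      exact hF hm
  · obtain ⟨m, hm, him⟩ := (mem_vars_iff_mem_support i).mp hi
    refine mem_support_iff.mp hm (coeff_modMonomial_of_le F ?_)
    exact Finsupp.single_le_iff.mpr (Nat.one_le_iff_ne_zero.mpr (Finsupp.mem_support_iff.mp him))

theorem exists_X_last_mul_add_rename_castSucc {k d : ℕ} {F : MvPolynomial (Fin (k + 1)) R}
    (hF : F.IsHomogeneous (d + 1)) :
    ∃ (H : MvPolynomial (Fin (k + 1)) R) (q : MvPolynomial (Fin k) R), H.IsHomogeneous d ∧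
      q.IsHomogeneous (d + 1) ∧ X (Fin.last k) * H + rename Fin.castSucc q = F := by
  obtain ⟨H, G, hH, hG, hlast, rfl⟩ := exists_X_mul_add_of_isHomogeneous (Fin.last k) hF
  have hvars : (G.vars : Set (Fin (k + 1))) ⊆ Set.range Fin.castSucc :=
    fun i hi => Fin.exists_castSucc_eq.mpr fun h => hlast (h ▸ hi)
  obtain ⟨q, rfl⟩ := exists_rename_eq_of_vars_subset_range G _ (Fin.castSucc_injective k) hvars
  exact ⟨H, q, hH, (IsHomogeneous.rename_isHomogeneous_iff (Fin.castSucc_injective k)).mp hG, rfl⟩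

end MvPolynomial

namespace RingTheory

open RingTheory.Sequence

variable {R : Type*} [CommRing R]

/-- Equivalently, with `I = span (range a)`, the natural surjection `(R ⧸ I)[X] → gr_I R` is an
isomorphism. -/
def IsQuasiRegular {σ : Type*} (a : σ → R) : Prop :=
  ∀ (d : ℕ) (F : MvPolynomial σ R), F.IsHomogeneous d →
    eval a F ∈ span (Set.range a) ^ (d + 1) → ∀ m, F.coeff m ∈ span (Set.range a)

namespace IsQuasiRegular

variable {σ : Type*} {a : σ → R}

theorem of_isEmpty [IsEmpty σ] : IsQuasiRegular a := fun d F _ hF =>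
  coeff_mem_of_isHomogeneous_zero a (isHomogeneous_of_isEmpty _ _ F)
    (pow_le_self d.succ_ne_zero hF)

theorem mem_pow_of_mul_mem_pow (hq : IsQuasiRegular a) {b : R}
    (hb : ∀ x, b * x ∈ span (Set.range a) → x ∈ span (Set.range a)) (n : ℕ) {x : R}
    (hx : b * x ∈ span (Set.range a) ^ n) : x ∈ span (Set.range a) ^ n := by
  induction n generalizing x with
  | zero => simp
  | succ n ih =>
    obtain ⟨P, hP, rfl⟩ :=
      (mem_span_pow_iff_exists_isHomogeneous a x).mp (ih (pow_le_pow_right n.le_succ hx))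
    have hbP : ∀ m, b * P.coeff m ∈ span (Set.range a) := by
      intro m
      rw [← coeff_C_mul]
      exact hq n _ (hP.C_mul b) (by rwa [map_mul, eval_C]) m
    simpa [pow_succ'] using eval_mem_mul_span_pow a hP fun m => hb _ (hbP m)

theorem coeff_mem_sup_span_singleton (hq : IsQuasiRegular a) (b : R) {e : ℕ}
    {q : MvPolynomial σ R} (hqe : q.IsHomogeneous e)
    (hev : eval a q ∈ span (Set.range a) ^ (e + 1) ⊔ span {b} * span (Set.range a) ^ e)
    (m : σ →₀ ℕ) : q.coeff m ∈ span (Set.range a) ⊔ span {b} := by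
  obtain ⟨u, hu, w, hw, huw⟩ := Submodule.mem_sup.mp hev
  obtain ⟨v, hv, rfl⟩ := mem_span_singleton_mul.mp hw
  obtain ⟨W, hW, rfl⟩ := (mem_span_pow_iff_exists_isHomogeneous a v).mp hv
  have hcoeff := hq e (q - C b * W) (hqe.sub (hW.C_mul b))
    (by rwa [map_sub, map_mul, eval_C, ← huw, add_sub_cancel_right])
  have : q.coeff m = (q - C b * W).coeff m + b * W.coeff m := by
    rw [coeff_sub, coeff_C_mul]; ring
  rw [this]
  exact add_mem (Submodule.mem_sup_left (hcoeff m))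
    (Submodule.mem_sup_right (mem_span_singleton.mpr (dvd_mul_right _ _)))

theorem of_init {k : ℕ} {a : Fin (k + 1) → R} (hq : IsQuasiRegular (Fin.init a))
    (hb : ∀ x, a (Fin.last k) * x ∈ span (Set.range (Fin.init a)) →
      x ∈ span (Set.range (Fin.init a))) :
    IsQuasiRegular a := by
  intro d
  rw [span_range_eq_span_range_init_sup]
  induction d with
  | zero => exact fun F hF hev => coeff_mem_of_isHomogeneous_zero a hF (by simpa using hev)
  | succ d ih =>
    intro F hF hev
    obtain ⟨H, q, hH, hqd, rfl⟩ := exists_X_last_mul_add_rename_castSucc hF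
    have heval : eval a (X (Fin.last k) * H + rename Fin.castSucc q) - a (Fin.last k) * eval a H =
        eval (Fin.init a) q := by
      rw [map_add, map_mul, eval_X, eval_rename, add_sub_cancel_left]; rfl
    obtain ⟨hHI, hqI⟩ := mem_sup_pow_of_sub_mul_mem_pow
      (fun _ => hq.mem_pow_of_mul_mem_pow hb (d + 1)) hev (heval ▸ eval_mem_span_pow _ hqd)
    have hHc := ih H hH hHI
    have hqc := hq.coeff_mem_sup_span_singleton _ hqd (heval ▸ hqI)
    rw [← MvPolynomial.mem_map_C_iff] at hHc hqc ⊢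
    exact add_mem (mul_mem_left _ _ hHc) (rename_mem_map_C _ hqc)

end IsQuasiRegular

theorem isWeaklyRegular_init_and_mem_of_mul_mem {k : ℕ} {a : Fin (k + 1) → R}
    (h : IsWeaklyRegular R (List.ofFn a)) :
    IsWeaklyRegular R (List.ofFn (Fin.init a)) ∧ ∀ x, a (Fin.last k) * x ∈
      span (Set.range (Fin.init a)) → x ∈ span (Set.range (Fin.init a)) := by
  rw [List.ofFn_succ', List.concat_eq_append, isWeaklyRegular_append_iff,
    isWeaklyRegular_singleton_iff] at h
  refine ⟨h.1, fun x hx => ?_⟩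
  have hJ : (ofList (List.ofFn (Fin.init a)) • ⊤ : Ideal R) = span (Set.range (Fin.init a)) := by
    rw [smul_eq_mul, mul_top]
    exact congrArg span (Set.ext fun _ => List.mem_ofFn)
  rw [← hJ] at hx ⊢
  exact mem_of_isSMulRegular_quotient_of_smul_mem h.2 hx

theorem isQuasiRegular_of_isWeaklyRegular :
    ∀ {k : ℕ} (a : Fin k → R), IsWeaklyRegular R (List.ofFn a) → IsQuasiRegular a
  | 0, _, _ => .of_isEmpty
  | _ + 1, _, h =>
    have ⟨hinit, hlast⟩ := isWeaklyRegular_init_and_mem_of_mul_mem h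
    .of_init (isQuasiRegular_of_isWeaklyRegular _ hinit) hlast

end RingTheory

/-- If `a_1, …, a_k` is a regular sequence in a commutative ring `R` and
`F` is a homogeneous polynomial in `k` variables over `R` with `F(a_1,…,a_k) = 0`,
then every coefficient of `F` lies in the ideal `(a_1,…,a_k)`. -/
theorem stmt0 {R : Type*} [CommRing R] {k : ℕ} (a : Fin k → R)
    (hreg : RingTheory.Sequence.IsRegular R (List.ofFn a))
    (d : ℕ) (F : MvPolynomial (Fin k) R) (hF : F.IsHomogeneous d)
    (hzero : MvPolynomial.eval a F = 0) :
    ∀ m : Fin k →₀ ℕ, F.coeff m ∈ Ideal.span (Set.range a) :=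
  RingTheory.isQuasiRegular_of_isWeaklyRegular a hreg.toIsWeaklyRegular d F hF
    (hzero ▸ zero_mem _)
end

section
/- Let p_0,...,p_m and q_0,...,q_m be homogeneous polynomials in ℂ[x_1,...,x_n] with each p_a of degree 2 and each q_a of degree 3, satisfying p_0 q_0 + p_1 q_1 + ... + p_m q_m = 0. If p_0,...,p_m form a regular sequence, then there exist homogeneous linear polynomials r_{ab} (0 ≤ a,b ≤ m) with r_{ab} = −r_{ba} such that q_a = Σ_b r_{ab} p_b for every a. -/
/-!
A weakly regular sequence has no syzygies beyond the Koszul ones: `∑ p_a q_a = 0` forces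
`q = r p` with `r` antisymmetric. By induction on the length, regularity of the last `p` modulo
the earlier ones puts the last `q` into the ideal of the earlier `p`'s, and subtracting that
expression leaves a shorter relation. Homogeneity is restored by replacing each `r_ab` with its
degree-one component, the only part of `r_ab` contributing to the cubic `q_a` since every `p_b`
is a quadric.
-/

open MvPolynomial

lemma Ideal.ofList_ofFn {R : Type*} [Semiring R] {k : ℕ} (p : Fin k → R) :
    Ideal.ofList (List.ofFn p) = Ideal.span (Set.range p) :=
  congrArg Ideal.span (Set.ext fun _ => List.mem_ofFn)

namespace RingTheory.Sequence

theorem IsWeaklyRegular.exists_antisymm_of_sum_mul_eq_zero {R : Type*} [CommRing R] {k : ℕ}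
    {p q : Fin k → R} (hreg : IsWeaklyRegular R (List.ofFn p)) (hrel : ∑ a, p a * q a = 0) :
    ∃ r : Fin k → Fin k → R, (∀ a b, r a b = - r b a) ∧ ∀ a, q a = ∑ b, r a b * p b := by
  induction k with
  | zero => exact ⟨fun a => a.elim0, fun a => a.elim0, fun a => a.elim0⟩
  | succ k ih =>
    rw [List.ofFn_succ', List.concat_eq_append, isWeaklyRegular_append_iff,
      isWeaklyRegular_singleton_iff, isSMulRegular_quotient_iff_mem_of_smul_mem,
      Ideal.smul_eq_mul, Ideal.mul_top, Ideal.ofList_ofFn] at hreg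
    obtain ⟨hinit, hlast⟩ := hreg
    rw [Fin.sum_univ_castSucc] at hrel
    have hqlast : q (Fin.last k) ∈ Ideal.span (Set.range (p ∘ Fin.castSucc)) := by
      refine hlast _ ?_
      rw [smul_eq_mul, eq_neg_of_add_eq_zero_right hrel]
      exact neg_mem <| Ideal.sum_mem _ fun a _ =>
        Ideal.mul_mem_right _ _ (Ideal.subset_span ⟨a, rfl⟩)
    obtain ⟨s, hs⟩ := Ideal.mem_span_range_iff_exists_fun.mp hqlast
    obtain ⟨r, hanti, hr⟩ := ih (q := fun a => q a.castSucc + s a * p (Fin.last k)) hinit <| by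
      rw [← hrel, ← hs]
      simp only [mul_add, Finset.sum_add_distrib, Finset.mul_sum, Function.comp_apply]
      exact congrArg _ (Finset.sum_congr rfl fun _ _ => by ring)
    refine ⟨Fin.lastCases (Fin.lastCases 0 s) fun a => Fin.lastCases (-s a) (r a), ?_, ?_⟩
    · intro a b
      induction a using Fin.lastCases <;> induction b using Fin.lastCases <;>
        simp only [Fin.lastCases_last, Fin.lastCases_castSucc, neg_zero, neg_neg]
      exact hanti _ _
    · intro a
      induction a using Fin.lastCases with
      | last => simpa [Fin.sum_univ_castSucc] using hs.symm
      | cast a =>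
        simp only [Fin.sum_univ_castSucc, Fin.lastCases_castSucc, Fin.lastCases_last]
        linear_combination hr a

end RingTheory.Sequence

namespace MvPolynomial

variable {σ R : Type*} [CommSemiring R]

attribute [local instance] gradedAlgebra in
lemma homogeneousComponent_add_mul_of_isHomogeneous {d : ℕ} (e : ℕ) (t : MvPolynomial σ R)
    {P : MvPolynomial σ R} (hP : P.IsHomogeneous d) :
    homogeneousComponent (e + d) (t * P) = homogeneousComponent e t * P := by
  rw [← decomposition.decompose'_apply, ← decomposition.decompose'_apply]
  exact DirectSum.coe_decompose_mul_add_of_right_mem (homogeneousSubmodule σ R) hP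

lemma IsHomogeneous.eq_sum_homogeneousComponent_mul {ι : Type*} [Fintype ι] {d e : ℕ}
    {p r : ι → MvPolynomial σ R} {q : MvPolynomial σ R} (hp : ∀ b, (p b).IsHomogeneous d)
    (hq : q.IsHomogeneous (e + d)) (h : q = ∑ b, r b * p b) :
    q = ∑ b, homogeneousComponent e (r b) * p b := by
  conv_lhs => rw [← homogeneousComponent_eq_self hq, h, map_sum]
  exact Finset.sum_congr rfl fun b _ => homogeneousComponent_add_mul_of_isHomogeneous e _ (hp b)

end MvPolynomial

/-- Condition B derivation: if `p_0,…,p_m` (degree 2) and `q_0,…,q_m` (degree 3) are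
homogeneous with `Σ p_a q_a = 0` and `p_0,…,p_m` is a regular sequence, then
`q_a = Σ_b r_{ab} p_b` for homogeneous linear `r_{ab}` with `r_{ab} = −r_{ba}`. -/
theorem stmt4 {n m : ℕ} (p q : Fin (m + 1) → MvPolynomial (Fin n) ℂ)
    (hp : ∀ a, (p a).IsHomogeneous 2) (hq : ∀ a, (q a).IsHomogeneous 3)
    (hrel : ∑ a, p a * q a = 0)
    (hreg : RingTheory.Sequence.IsRegular (MvPolynomial (Fin n) ℂ) (List.ofFn p)) :
    ∃ r : Fin (m + 1) → Fin (m + 1) → MvPolynomial (Fin n) ℂ,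
      (∀ a b, (r a b).IsHomogeneous 1) ∧ (∀ a b, r a b = - r b a) ∧
      ∀ a, q a = ∑ b, r a b * p b := by
  obtain ⟨r, hanti, hqr⟩ := hreg.toIsWeaklyRegular.exists_antisymm_of_sum_mul_eq_zero hrel
  exact ⟨fun a b => homogeneousComponent 1 (r a b),
    fun a b => homogeneousComponent_isHomogeneous 1 _,
    fun a b => (congrArg (homogeneousComponent 1) (hanti a b)).trans (map_neg _ _),
    fun a => (hq a : (q a).IsHomogeneous (1 + 2)).eq_sum_homogeneousComponent_mul hp (hqr a)⟩
end

section
/- Let r_{ab} (0 ≤ a,b ≤ m) be elements of a commutative ring R and p_0,...,p_m a regular sequence of homogeneous degree-2 polynomials in ℂ[x_1,...,x_n] with each r_{ab} homogeneous of degree 1. If Σ_{a,b} (r_{ab} + r_{ba}) p_a p_b = 0, then r_{ab} + r_{ba} = 0 for all a,b. -/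
/-!
Syzygies of a weakly regular sequence `q` are Koszul: if `∑ a, q a • s a = 0` then
`s a = ∑ b, q b • A a b` for an alternating matrix `A` (induction on the length, passing to
`M ⧸ q₀ M`). Applied first to `t a = ∑ b, q b • S a b` and then to the rows of `S - A`, this puts
`S a b + S b a` in the ideal generated by `q`. With `S a b = r a b + r b a` that element is
`2 (r a b + r b a)`, homogeneous of degree 1, while an ideal generated in degree 2 has no
nonzero elements of degree 1.
-/

open scoped Pointwise

namespace Matrix

variable {ι R M N : Type*} [AddCommGroup M]

structure IsAlternating (A : Matrix ι ι M) : Prop where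
  diag_eq_zero : ∀ a, A a a = 0
  apply_swap : ∀ a b, A b a = -A a b

theorem IsAlternating.sum_sum_smul_eq_zero [Fintype ι] [CommRing R] [Module R M]
    {A : Matrix ι ι M} (hA : A.IsAlternating) (q : ι → R) :
    ∑ a, ∑ b, (q a * q b) • A a b = 0 := by
  rw [← Finset.sum_product']
  refine Finset.sum_ninvolution Prod.swap (fun ⟨a, b⟩ => ?_) (fun ⟨a, b⟩ hne => ?_)
    (fun _ => Finset.mem_univ _) Prod.swap_swap
  · change (q a * q b) • A a b + (q b * q a) • A b a = 0
    rw [hA.apply_swap a b, mul_comm (q b), smul_neg, add_neg_cancel]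
  · rintro h
    obtain rfl : a = b := (Prod.ext_iff.mp h).1.symm
    exact hne (by rw [hA.diag_eq_zero, smul_zero])

theorem IsAlternating.exists_lift [LinearOrder ι] [Ring R] [Module R M] [AddCommGroup N]
    [Module R N] {f : M →ₗ[R] N} (hf : Function.Surjective f) {A : Matrix ι ι N}
    (hA : A.IsAlternating) :
    ∃ B : Matrix ι ι M, B.IsAlternating ∧ ∀ a b, f (B a b) = A a b := by
  choose C hC using fun a b => hf (A a b)
  refine ⟨fun a b => if a < b then C a b else if b < a then -C b a else 0,
    ⟨fun a => ?_, fun a b => ?_⟩, fun a b => ?_⟩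
  · simp
  · rcases lt_trichotomy a b with h | rfl | h
    · simp [h, h.not_gt]
    · simp
    · simp [h, h.not_gt]
  · rcases lt_trichotomy a b with h | rfl | h
    · simp [h, hC]
    · simp [hA.diag_eq_zero]
    · simp [h, h.not_gt, hC, hA.apply_swap b a]

/-- The block matrix `[[0, -cᵀ], [c, B]]`. -/
def alternatingCons {k : ℕ} (c : Fin k → M) (B : Matrix (Fin k) (Fin k) M) :
    Matrix (Fin (k + 1)) (Fin (k + 1)) M :=
  of (Fin.cons (Fin.cons 0 (-c)) fun i => Fin.cons (c i) (B i))

theorem IsAlternating.alternatingCons {k : ℕ} {B : Matrix (Fin k) (Fin k) M}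
    (hB : B.IsAlternating) (c : Fin k → M) : (alternatingCons c B).IsAlternating := by
  refine ⟨Fin.cases ?_ fun i => ?_,
    Fin.cases (Fin.cases ?_ fun j => ?_) fun i => Fin.cases ?_ fun j => ?_⟩
  all_goals simp [Matrix.alternatingCons, hB.diag_eq_zero]
  exact hB.apply_swap i j

end Matrix

section Koszul

variable {R M : Type*} [CommRing R] [AddCommGroup M] [Module R M]

theorem Submodule.exists_eq_smul_add_of_mkQ_eq {x : R} {m m' : M}
    (h : (x • ⊤ : Submodule R M).mkQ m = (x • ⊤ : Submodule R M).mkQ m') :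
    ∃ c, m = x • c + m' := by
  obtain ⟨c, -, hc⟩ :=
    (Submodule.mem_smul_pointwise_iff_exists _ _ _).mp ((Submodule.Quotient.eq _).mp h)
  exact ⟨c, by rw [hc, sub_add_cancel]⟩

theorem IsSMulRegular.eq_neg_sum_smul_of_smul_add_sum_smul_eq_zero {k : ℕ} {x : R}
    (hx : IsSMulRegular M x) {q : Fin k → R} {s₀ : M} {s c : Fin k → M}
    {B : Matrix (Fin k) (Fin k) M} (hB : B.IsAlternating)
    (hs : ∀ i, s i = x • c i + ∑ j, q j • B i j) (hrel : x • s₀ + ∑ i, q i • s i = 0) :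
    s₀ = -∑ i, q i • c i := by
  refine eq_neg_of_add_eq_zero_left (hx ?_)
  calc x • (s₀ + ∑ i, q i • c i)
      = x • s₀ + ∑ i, q i • s i - ∑ i, ∑ j, (q i * q j) • B i j := by
        simp only [hs, smul_add, Finset.smul_sum, smul_smul, Finset.sum_add_distrib, mul_comm x]
        abel
    _ = x • 0 := by rw [hrel, hB.sum_sum_smul_eq_zero, sub_zero, smul_zero]

namespace RingTheory.Sequence.IsWeaklyRegular

theorem exists_isAlternating_of_sum_smul_eq_zero {k : ℕ} {q : Fin k → R}
    (hq : IsWeaklyRegular M (List.ofFn q)) {s : Fin k → M} (hs : ∑ a, q a • s a = 0) :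
    ∃ A : Matrix (Fin k) (Fin k) M, A.IsAlternating ∧ ∀ a, s a = ∑ b, q b • A a b := by
  induction k generalizing M with
  | zero => exact ⟨0, ⟨finZeroElim, finZeroElim⟩, finZeroElim⟩
  | succ k ih =>
    -- Modulo `q 0` the tail of `s` is a syzygy of the tail of `q`; lift its alternating
    -- matrix and absorb the error into `q 0 • c`.
    rw [List.ofFn_succ, isWeaklyRegular_cons_iff] at hq
    obtain ⟨hq₀, htail⟩ := hq
    set π := (q 0 • ⊤ : Submodule R M).mkQ
    have hπq₀ : ∀ m, π (q 0 • m) = 0 := fun m =>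
      (Submodule.Quotient.mk_eq_zero _).mpr (Submodule.smul_mem_pointwise_smul m _ ⊤ trivial)
    have hrel := congrArg π hs
    rw [Fin.sum_univ_succ, map_add, hπq₀, zero_add, map_sum, map_zero] at hrel
    simp only [map_smul] at hrel
    obtain ⟨Ā, hĀ, hsĀ⟩ := ih htail hrel
    obtain ⟨B, hB, hBĀ⟩ := hĀ.exists_lift (Submodule.mkQ_surjective _)
    have hc : ∀ i, ∃ c, s i.succ = q 0 • c + ∑ j, q j.succ • B i j := fun i =>
      Submodule.exists_eq_smul_add_of_mkQ_eq (by simp [π, hBĀ, ← hsĀ])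
    choose c hc using hc
    have hs₀ := hq₀.eq_neg_sum_smul_of_smul_add_sum_smul_eq_zero hB hc
      (by rwa [Fin.sum_univ_succ] at hs)
    refine ⟨Matrix.alternatingCons c B, hB.alternatingCons c, Fin.cases ?_ fun i => ?_⟩
    · simp [Matrix.alternatingCons, Fin.sum_univ_succ, hs₀]
    · simp [Matrix.alternatingCons, Fin.sum_univ_succ, hc i]

theorem add_swap_mem_of_sum_sum_smul_eq_zero {k : ℕ} {q : Fin k → R}
    (hq : IsWeaklyRegular M (List.ofFn q)) {S : Matrix (Fin k) (Fin k) M}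
    (hS : ∑ a, ∑ b, (q a * q b) • S a b = 0) (a b : Fin k) :
    S a b + S b a ∈ Ideal.span (Set.range q) • (⊤ : Submodule R M) := by
  simp only [← smul_smul, ← Finset.smul_sum] at hS
  obtain ⟨A, hA, hSA⟩ := hq.exists_isAlternating_of_sum_smul_eq_zero hS
  have hrel : ∀ a, ∑ b, q b • (S a b - A a b) = 0 := fun a => by
    simp only [smul_sub, Finset.sum_sub_distrib, hSA a, sub_self]
  choose T hT using fun a => hq.exists_isAlternating_of_sum_smul_eq_zero (hrel a)
  have hsum : S a b + S b a = ∑ c, q c • (T a b c + T b a c) := by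
    rw [Finset.sum_congr rfl fun c _ => smul_add .., Finset.sum_add_distrib, ← (hT a).2 b,
      ← (hT b).2 a, hA.apply_swap a b]
    abel
  rw [hsum]
  exact Submodule.sum_mem _ fun c _ =>
    Submodule.smul_mem_smul (Ideal.subset_span ⟨c, rfl⟩) Submodule.mem_top

end RingTheory.Sequence.IsWeaklyRegular

end Koszul

namespace MvPolynomial

variable {σ R : Type*} [CommSemiring R] {s : Set (MvPolynomial σ R)} {d : ℕ}

theorem coeff_eq_zero_of_mem_span_isHomogeneous (hs : ∀ p ∈ s, p.IsHomogeneous d)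
    {x : MvPolynomial σ R} (hx : x ∈ Ideal.span s) {μ : σ →₀ ℕ} (hμ : μ.degree < d) :
    coeff μ x = 0 := by
  induction hx using Submodule.span_induction generalizing μ with
  | mem p hp => exact (hs p hp).coeff_eq_zero hμ.ne
  | zero => exact coeff_zero μ
  | add x y _ _ hx hy => rw [coeff_add, hx hμ, hy hμ, add_zero]
  | smul a x _ hx =>
    classical
    rw [smul_eq_mul, coeff_mul]
    refine Finset.sum_eq_zero fun ν hν => ?_
    rw [Finset.HasAntidiagonal.mem_antidiagonal] at hν
    have : ν.2.degree ≤ μ.degree := by rw [← hν, map_add]; exact Nat.le_add_left _ _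
    rw [hx (this.trans_lt hμ), mul_zero]

theorem IsHomogeneous.eq_zero_of_mem_span {x : MvPolynomial σ R} {e : ℕ}
    (hx : x.IsHomogeneous e) (hed : e < d) (hs : ∀ p ∈ s, p.IsHomogeneous d)
    (hmem : x ∈ Ideal.span s) : x = 0 := by
  ext μ
  rw [coeff_zero]
  by_cases hμ : μ.degree = e
  · exact coeff_eq_zero_of_mem_span_isHomogeneous hs hmem (hμ ▸ hed)
  · exact hx.coeff_eq_zero hμ

end MvPolynomial

/-- If `r_{ab}` are homogeneous of degree 1 and `p_0,…,p_m` is a regular sequence of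
homogeneous degree-2 polynomials in `ℂ[x_1,…,x_n]` with
`Σ_{a,b} (r_{ab} + r_{ba}) p_a p_b = 0`, then `r_{ab} + r_{ba} = 0` for all `a, b`. -/
theorem stmt6 {n m : ℕ} (r : Fin (m + 1) → Fin (m + 1) → MvPolynomial (Fin n) ℂ)
    (hr : ∀ a b, (r a b).IsHomogeneous 1)
    (p : Fin (m + 1) → MvPolynomial (Fin n) ℂ)
    (hp : ∀ a, (p a).IsHomogeneous 2)
    (hreg : RingTheory.Sequence.IsRegular (MvPolynomial (Fin n) ℂ) (List.ofFn p))
    (hrel : ∑ a, ∑ b, (r a b + r b a) * (p a * p b) = 0) :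
    ∀ a b, r a b + r b a = 0 := by
  intro a b
  have hmem : (r a b + r b a) + (r b a + r a b) ∈ Ideal.span (Set.range p) := by
    simpa only [smul_eq_mul, Ideal.mul_top] using
      hreg.toIsWeaklyRegular.add_swap_mem_of_sum_sum_smul_eq_zero
        (S := fun a b => r a b + r b a) (by simpa only [smul_eq_mul, mul_comm] using hrel) a b
  have hzero := (((hr a b).add (hr b a)).add ((hr b a).add (hr a b))).eq_zero_of_mem_span
    one_lt_two (by rintro _ ⟨c, rfl⟩; exact hp c) hmem
  rwa [add_comm (r b a), add_self_eq_zero] at hzero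
end
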